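/- arXiv:2212.11969 — 8 statements merged into one kernel-verified Lean document; each statement's English description precedes it below -/
import Mathlib

section
/- (Eventown) Let n ∈ ℕ and let F be a family of subsets of [n] such that |F_1 ∩ F_2| is even for all F_1, F_2 ∈ F (including F_1 = F_2, so every member has even size). Then |F| ≤ 2^⌊n/2⌋. -/
/-!
Identify a set with its indicator vector in `𝔽₂ⁿ`; the parity of `|A ∩ B|` is then the standard
dot product of the indicator vectors. The members of an eventown family therefore span a
subspace `W` contained in its own orthogonal complement. Since the dot product is nondegenerate,
`dim W + dim W⊥ = n`, so `dim W ≤ n / 2` and the family has at most `|W| ≤ 2 ^ (n / 2)` members.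
-/

open Module Finset Matrix

namespace LinearMap.BilinForm

section CommSemiring

variable {R M : Type*} [CommSemiring R] [AddCommMonoid M] [Module R M]
  {B : LinearMap.BilinForm R M}

theorem span_le_orthogonal_span {S : Set M} (hS : ∀ x ∈ S, ∀ y ∈ S, B x y = 0) :
    Submodule.span R S ≤ B.orthogonal (Submodule.span R S) := by
  refine Submodule.span_le.mpr fun y hy => ?_
  have hker : Submodule.span R S ≤ LinearMap.ker (B.flip y) :=
    Submodule.span_le.mpr fun x hx => by simpa using hS x hx y hy
  exact fun x hx => hker hx

end CommSemiring

section Field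

variable {K V : Type*} [Field K] [AddCommGroup V] [Module K V] [FiniteDimensional K V]
  {B : LinearMap.BilinForm K V}

theorem finrank_le_half_of_le_orthogonal (hB : B.Nondegenerate) {W : Submodule K V}
    (hW : W ≤ B.orthogonal W) : finrank K W ≤ finrank K V / 2 := by
  have hmono := Submodule.finrank_mono hW
  rw [finrank_orthogonal hB] at hmono
  have := Submodule.finrank_le W
  omega

theorem card_le_pow_half_finrank_of_isOrtho [Fintype K] (hB : B.Nondegenerate) {S : Finset V}
    (hS : ∀ x ∈ S, ∀ y ∈ S, B x y = 0) : #S ≤ Fintype.card K ^ (finrank K V / 2) := by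
  have : Finite V := Module.finite_of_finite K
  set W := Submodule.span K (S : Set V)
  have : Fintype W := Fintype.ofFinite W
  calc #S = (S : Set V).ncard := (Set.ncard_coe_finset S).symm
    _ ≤ (W : Set V).ncard := Set.ncard_le_ncard Submodule.subset_span (Set.toFinite _)
    _ = Fintype.card K ^ finrank K W := by
      rw [← Nat.card_coe_set_eq, SetLike.coe_sort_coe, Nat.card_eq_fintype_card,
        card_eq_pow_finrank (K := K)]
    _ ≤ Fintype.card K ^ (finrank K V / 2) :=
      Nat.pow_le_pow_right Fintype.card_pos
        (finrank_le_half_of_le_orthogonal hB (span_le_orthogonal_span hS))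

end Field

end LinearMap.BilinForm

theorem Matrix.nondegenerate_dotProductBilin {ι K : Type*} [Fintype ι] [DecidableEq ι]
    [Field K] :
    (dotProductBilin K K : LinearMap.BilinForm K (ι → K)).Nondegenerate := by
  refine ⟨fun v hv => funext fun i => ?_, fun v hv => funext fun i => ?_⟩ <;>
    simpa using hv (Pi.single i 1)

theorem Finset.indicator_one_dotProduct_indicator_one {ι R : Type*} [Fintype ι] [DecidableEq ι]
    [NonAssocSemiring R] (A B : Finset ι) :
    (A : Set ι).indicator (1 : ι → R) ⬝ᵥ (B : Set ι).indicator 1 = #(A ∩ B) := by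
  simp [dotProduct, Set.indicator_apply, Finset.inter_comm B A]

/-- Eventown theorem: a family of subsets of `[n]` all of whose pairwise
(including self-) intersections have even size has at most `2^⌊n/2⌋` members. -/
theorem eventown (n : ℕ) (F : Finset (Finset (Fin n)))
    (h : ∀ A ∈ F, ∀ B ∈ F, Even (A ∩ B).card) :
    F.card ≤ 2 ^ (n / 2) := by
  let χ : Finset (Fin n) → Fin n → ZMod 2 := fun A => (A : Set (Fin n)).indicator 1
  have hχ : Function.Injective χ := fun A B hAB =>
    Finset.coe_injective (Set.indicator_one_inj (ZMod 2) hAB)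
  have hortho :
      ∀ u ∈ F.image χ, ∀ v ∈ F.image χ, dotProductBilin (ZMod 2) (ZMod 2) u v = 0 := by
    simp only [mem_image]
    rintro _ ⟨A, hA, rfl⟩ _ ⟨B, hB, rfl⟩
    simpa [χ, indicator_one_dotProduct_indicator_one, ZMod.natCast_eq_zero_iff_even]
      using h A hA B hB
  calc #F = #(F.image χ) := (card_image_of_injective F hχ).symm
    _ ≤ Fintype.card (ZMod 2) ^ (finrank (ZMod 2) (Fin n → ZMod 2) / 2) :=
      LinearMap.BilinForm.card_le_pow_half_finrank_of_isOrtho nondegenerate_dotProductBilin hortho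
    _ = 2 ^ (n / 2) := by rw [ZMod.card, finrank_fin_fun]
end

section
/- The probability that a uniformly random n×n symmetric matrix over F_2 has rank at most n−s is at most 2^{s·log₂(n) − C(s,2)}, where C(s,2) = s(s−1)/2. -/
/-!
Let `M` be a symmetric `n × n` matrix over `𝔽_q` of rank at most `n - s`. Some set `S` of `n - s`
rows spans the row space, so every other row is a combination of the rows in `S`. By symmetry `M`
is then determined by these coefficients (`q ^ (s (n - s))` choices) together with the symmetric
block `M_{S × S}` (`q ^ C(n - s + 1, 2)` choices). There are `C(n, s) ≤ n ^ s` choices of `S` and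
`q ^ C(n + 1, 2)` symmetric matrices, and
`C(n + 1, 2) = C(n - s + 1, 2) + s (n - s) + C(s, 2) + s`.
-/

open Submodule

namespace Matrix

theorem card_isSymm {α K : Type*} [Finite α] :
    Nat.card {M : Matrix α α K // M.IsSymm} = Nat.card K ^ (Nat.card α + 1).choose 2 := by
  classical
  have := Fintype.ofFinite α
  let e : {M : Matrix α α K // M.IsSymm} ≃ (Sym2 α → K) :=
    (Equiv.subtypeEquivRight fun M => IsSymm.ext_iff.trans forall_comm).trans Sym2.lift
  rw [Nat.card_congr e, Nat.card_fun, Nat.card_eq_fintype_card (α := Sym2 α), Sym2.card,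
    Nat.card_eq_fintype_card (α := α)]

theorem exists_card_eq_forall_row_mem_span {m n K : Type*} [Field K] [Fintype m] [Fintype n]
    (M : Matrix m n K) {k : ℕ} (hrank : M.rank ≤ k) (hk : k ≤ Fintype.card m) :
    ∃ S : Finset m, S.card = k ∧ ∀ i, M.row i ∈ span K (M.row '' S) := by
  classical
  obtain ⟨t, hts, htcard, htspan, -⟩ := exists_finset_span_eq_linearIndepOn K (Set.range M.row)
  obtain ⟨s, hst, hinj⟩ := Set.exists_image_eq_injOn_of_subset_range hts
  have hscard : s.toFinset.card ≤ k := by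
    have : s.toFinset.image M.row = t := Finset.coe_injective (by simpa using hst)
    rw [← Finset.card_image_of_injOn (by simpa using hinj), this, htcard,
      ← rank_eq_finrank_span_row]
    exact hrank
  obtain ⟨S, hsS, -, hScard⟩ :=
    Finset.exists_subsuperset_card_eq (Finset.subset_univ _) hscard (by simpa using hk)
  refine ⟨S, hScard, fun i => ?_⟩
  have hi : M.row i ∈ span K (M.row '' s) := by
    rw [hst, htspan]
    exact subset_span ⟨i, rfl⟩
  exact span_mono (Set.image_mono (by simpa using hsS)) hi

theorem IsSymm.eq_of_forall_row_eq_sum {α K : Type*} [CommSemiring K] [Fintype α]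
    {M N : Matrix α α K} (hM : M.IsSymm) (hN : N.IsSymm) (S : Finset α) (c : α → S → K)
    (hMc : ∀ i ∉ S, ∑ k, c i k • M k = M i) (hNc : ∀ i ∉ S, ∑ k, c i k • N k = N i)
    (hMN : ∀ i ∈ S, ∀ j ∈ S, M i j = N i j) : M = N := by
  have hrow : ∀ i ∈ S, ∀ j, M i j = N i j := by
    intro i hi j
    by_cases hj : j ∈ S
    · exact hMN i hi j hj
    rw [← hM.apply, ← hN.apply, ← hMc j hj, ← hNc j hj]
    simp only [Finset.sum_apply, Pi.smul_apply, smul_eq_mul]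
    exact Finset.sum_congr rfl fun k _ => by rw [hMN k k.2 i hi]
  ext i j
  by_cases hi : i ∈ S
  · exact hrow i hi j
  rw [← hMc i hi, ← hNc i hi]
  simp only [Finset.sum_apply, Pi.smul_apply, smul_eq_mul]
  exact Finset.sum_congr rfl fun k _ => by rw [hrow k k.2 j]

theorem card_isSymm_forall_row_mem_span_le {α K : Type*} [Field K] [Finite K] [Fintype α]
    (S : Finset α) :
    Nat.card {M : Matrix α α K // M.IsSymm ∧ ∀ i, M.row i ∈ span K (M.row '' S)} ≤
      Nat.card K ^ ((Fintype.card α - S.card) * S.card) * Nat.card K ^ (S.card + 1).choose 2 := by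
  classical
  have hc (M : {M : Matrix α α K // M.IsSymm ∧ ∀ i, M.row i ∈ span K (M.row '' S)}) (i : α) :
      ∃ c : S → K, ∑ k, c k • M.1.row k = M.1.row i :=
    (Fintype.mem_span_image_iff_exists_fun K).1 (M.2.2 i)
  choose c hc using hc
  let f (M : {M : Matrix α α K // M.IsSymm ∧ ∀ i, M.row i ∈ span K (M.row '' S)}) :
      ({i // i ∉ S} → S → K) × {A : Matrix S S K // A.IsSymm} :=
    (fun i => c M i, ⟨M.1.submatrix (↑) (↑), M.2.1.submatrix _⟩)
  have hf : Function.Injective f := by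
    intro M N hMN
    simp only [f, Prod.mk.injEq, Subtype.mk.injEq, funext_iff] at hMN
    obtain ⟨hcMN, hMN⟩ := hMN
    refine Subtype.ext (M.2.1.eq_of_forall_row_eq_sum N.2.1 S (c M) (fun i _ => hc M i)
      (fun i hi => ?_) fun i hi j hj => congrFun₂ hMN ⟨i, hi⟩ ⟨j, hj⟩)
    rw [funext (hcMN ⟨i, hi⟩)]
    exact hc N i
  have hSc : Nat.card {i // i ∉ S} = Fintype.card α - S.card := by
    simp [Nat.card_eq_fintype_card, Fintype.card_subtype_compl]
  calc _ ≤ _ := Nat.card_le_card_of_injective f hf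
    _ = _ := by
      rw [Nat.card_prod, Nat.card_fun, Nat.card_fun, card_isSymm, Nat.card_eq_finsetCard, hSc,
        ← pow_mul, mul_comm S.card]

theorem card_isSymm_rank_le_le {α K : Type*} [Field K] [Finite K] [Fintype α] {k : ℕ}
    (hk : k ≤ Fintype.card α) :
    Nat.card {M : Matrix α α K // M.IsSymm ∧ M.rank ≤ k} ≤
      (Fintype.card α).choose k *
        (Nat.card K ^ ((Fintype.card α - k) * k) * Nat.card K ^ (k + 1).choose 2) := by
  classical
  have hS (M : {M : Matrix α α K // M.IsSymm ∧ M.rank ≤ k}) :=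
    exists_card_eq_forall_row_mem_span M.1 M.2.2 hk
  choose S hScard hS using hS
  let f (M : {M : Matrix α α K // M.IsSymm ∧ M.rank ≤ k}) :
      Σ T : {T : Finset α // T.card = k},
        {M : Matrix α α K // M.IsSymm ∧ ∀ i, M.row i ∈ span K (M.row '' T.1)} :=
    ⟨⟨S M, hScard M⟩, M.1, M.2.1, hS M⟩
  have hf : Function.Injective f := fun M N h => Subtype.ext (congrArg (fun x => x.2.1) h)
  calc _ ≤ _ := Nat.card_le_card_of_injective f hf
    _ = _ := Nat.card_sigma
    _ ≤ ∑ _T : {T : Finset α // T.card = k},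
          Nat.card K ^ ((Fintype.card α - k) * k) * Nat.card K ^ (k + 1).choose 2 :=
      Finset.sum_le_sum fun T _ => by simpa only [T.2] using card_isSymm_forall_row_mem_span_le T.1
    _ = _ := by rw [Finset.sum_const, Finset.card_univ, Fintype.card_finset_len, smul_eq_mul]

theorem card_isSymm_rank_le_sub_mul_le {α K : Type*} [Field K] [Finite K] [Fintype α] {s : ℕ}
    (hs : s ≤ Fintype.card α) :
    Nat.card {M : Matrix α α K // M.IsSymm ∧ M.rank ≤ Fintype.card α - s} *
        Nat.card K ^ s.choose 2 ≤
      Fintype.card α ^ s * Nat.card K ^ (Fintype.card α + 1).choose 2 := by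
  have hcard := card_isSymm_rank_le_le (K := K) (Nat.sub_le (Fintype.card α) s)
  generalize Fintype.card α = n at hs hcard ⊢
  obtain ⟨t, rfl⟩ := Nat.exists_eq_add_of_le hs
  simp only [add_tsub_cancel_left, add_tsub_cancel_right, ← Nat.choose_symm_add] at hcard ⊢
  have hexp : (s + t + 1).choose 2 = s.choose 2 + s + s * t + (t + 1).choose 2 :=
    Nat.cast_injective (R := ℚ) (by push_cast [Nat.cast_choose_two]; ring)
  have hq : 1 ≤ Nat.card K := Nat.card_pos
  calc _ ≤ (s + t).choose s * (Nat.card K ^ (s * t) * Nat.card K ^ (t + 1).choose 2) *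
          Nat.card K ^ s.choose 2 := by
        gcongr
    _ = (s + t).choose s * Nat.card K ^ (s * t + (t + 1).choose 2 + s.choose 2) := by ring
    _ ≤ (s + t) ^ s * Nat.card K ^ (s + t + 1).choose 2 := by
        gcongr
        · exact Nat.choose_le_pow _ _
        · omega

end Matrix

theorem pow_div_two_pow_choose_two_le_rpow (n s : ℕ) :
    (n : ℝ) ^ s / 2 ^ s.choose 2 ≤ (2 : ℝ) ^ ((s : ℝ) * Real.logb 2 n - s * (s - 1) / 2) := by
  rw [Real.rpow_sub two_pos, ← Nat.cast_choose_two, Real.rpow_natCast]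
  gcongr
  rcases n.eq_zero_or_pos with rfl | hn
  · simpa using pow_le_one₀ (M₀ := ℝ) le_rfl zero_le_one
  · rw [mul_comm, Real.rpow_mul zero_le_two, Real.rpow_logb two_pos (by norm_num)
      (by exact_mod_cast hn), Real.rpow_natCast]

/-- The probability that a uniformly random symmetric `n × n` matrix over `F_2`
has rank at most `n - s` is at most `2 ^ (s·log₂ n − s(s−1)/2)`. -/
theorem prob_symm_matrix_low_rank (n s : ℕ) :
    ((Nat.card {M : Matrix (Fin n) (Fin n) (ZMod 2) //
        M.IsSymm ∧ (M.rank : ℤ) ≤ (n : ℤ) - (s : ℤ)}) : ℝ) /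
      ((Nat.card {M : Matrix (Fin n) (Fin n) (ZMod 2) // M.IsSymm}) : ℝ) ≤
    (2 : ℝ) ^ ((s : ℝ) * Real.logb 2 n - (s : ℝ) * ((s : ℝ) - 1) / 2) := by
  have hsym : Nat.card {M : Matrix (Fin n) (Fin n) (ZMod 2) // M.IsSymm} =
      2 ^ (n + 1).choose 2 := by
    rw [Matrix.card_isSymm]
    simp
  have hlow : Nat.card {M : Matrix (Fin n) (Fin n) (ZMod 2) //
        M.IsSymm ∧ (M.rank : ℤ) ≤ (n : ℤ) - (s : ℤ)} * 2 ^ s.choose 2 ≤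
      n ^ s * 2 ^ (n + 1).choose 2 := by
    by_cases hsn : s ≤ n
    · rw [Nat.card_congr (Equiv.subtypeEquivRight fun M => and_congr_right fun _ =>
        show (M.rank : ℤ) ≤ n - s ↔ M.rank ≤ n - s by omega)]
      simpa using Matrix.card_isSymm_rank_le_sub_mul_le (K := ZMod 2) (α := Fin n)
        (s := s) (by simpa using hsn)
    · have : IsEmpty {M : Matrix (Fin n) (Fin n) (ZMod 2) //
          M.IsSymm ∧ (M.rank : ℤ) ≤ (n : ℤ) - (s : ℤ)} := ⟨fun M => by omega⟩
      simp
  refine le_trans ?_ (pow_div_two_pow_choose_two_le_rpow n s)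
  rw [hsym, div_le_div_iff₀ (by positivity) (by positivity)]
  exact_mod_cast hlow
end

section
/- For every digraph D (loopless, no digons) and every vertex v ∈ V(D), the inversion number satisfies inv(D) ≤ inv(D − {v}) + 2. -/
/-- Inverting a set `X` in a digraph `D`: edges with both endpoints in `X`
are reversed, all other edges are unchanged. -/
def Invert {V : Type*} (D : V → V → Prop) (X : Set V) : V → V → Prop :=
  fun u v => (u ∈ X ∧ v ∈ X ∧ D v u) ∨ (¬(u ∈ X ∧ v ∈ X) ∧ D u v)

/-- A digraph is acyclic if it has no directed cycle. -/
def IsAcyclic {V : Type*} (D : V → V → Prop) : Prop :=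
  ∀ x : V, ¬ Relation.TransGen D x x

/-- A loopless digraph without digons (an oriented graph). -/
def IsOriented {V : Type*} (D : V → V → Prop) : Prop :=
  ∀ u v, D u v → ¬ D v u

/-- A tournament: an oriented graph with exactly one edge between any two
distinct vertices. -/
def IsTournament {V : Type*} (D : V → V → Prop) : Prop :=
  (∀ u v, D u v → ¬ D v u) ∧ ∀ u v, u ≠ v → D u v ∨ D v u

/-- The inversion number of a digraph: the minimum length of a decycling
family, i.e. a sequence of sets whose successive inversion makes `D` acyclic. -/
noncomputable def invNum {V : Type*} (D : V → V → Prop) : ℕ :=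
  sInf {k | ∃ Xs : List (Set V), Xs.length = k ∧ IsAcyclic (Xs.foldl Invert D)}

lemma invert_oriented {V : Type*} {D : V → V → Prop} (hD : IsOriented D) (X : Set V) :
    IsOriented (Invert D X) := by
  intro u v huv hvu
  rcases huv with ⟨hu, hv, h1⟩ | ⟨hn, h1⟩ <;> rcases hvu with ⟨hu', hv', h2⟩ | ⟨hn', h2⟩
  · exact hD _ _ h1 h2
  · exact hn' ⟨hv, hu⟩
  · exact hn ⟨hv', hu'⟩
  · exact hD _ _ h1 h2

lemma foldl_oriented {V : Type*} (Xs : List (Set V)) {D : V → V → Prop} (hD : IsOriented D) :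
    IsOriented (Xs.foldl Invert D) := by
  induction Xs generalizing D with
  | nil => exact hD
  | cons X Xs ih => exact ih (invert_oriented hD X)

lemma restrict_invert {V : Type*} (D : V → V → Prop) (v : V) (X : Set {u : V // u ≠ v}) :
    (fun a b : {u : V // u ≠ v} => Invert D (Subtype.val '' X) a b)
      = Invert (fun a b : {u : V // u ≠ v} => D a b) X := by
  funext a b
  have ha : (↑a : V) ∈ Subtype.val '' X ↔ a ∈ X :=
    ⟨fun ⟨c, hc, hcv⟩ => by rwa [Subtype.val_injective hcv] at hc, fun h => ⟨a, h, rfl⟩⟩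
  have hb : (↑b : V) ∈ Subtype.val '' X ↔ b ∈ X :=
    ⟨fun ⟨c, hc, hcv⟩ => by rwa [Subtype.val_injective hcv] at hc, fun h => ⟨b, h, rfl⟩⟩
  simp only [Invert, ha, hb]

lemma restrict_foldl {V : Type*} (v : V) (Xs : List (Set {u : V // u ≠ v}))
    (D : V → V → Prop) :
    (fun a b : {u : V // u ≠ v} => ((Xs.map (fun X => Subtype.val '' X)).foldl Invert D) a b)
      = Xs.foldl Invert (fun a b : {u : V // u ≠ v} => D a b) := by
  induction Xs generalizing D with
  | nil => rfl
  | cons X Xs ih =>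
    simp only [List.map_cons, List.foldl_cons]
    rw [ih, restrict_invert]

/-- The key construction: from a decycling family of `D − v` of length `k`,
build one of `D` of length `k + 2`. -/
lemma step {V : Type*} (D : V → V → Prop) (hD : IsOriented D) (v : V)
    (Xs : List (Set {u : V // u ≠ v}))
    (h : IsAcyclic (Xs.foldl Invert (fun a b : {u : V // u ≠ v} => D a b))) :
    ∃ Ys : List (Set V), Ys.length = Xs.length + 2 ∧ IsAcyclic (Ys.foldl Invert D) := by
  classical
  set D1 : V → V → Prop := (Xs.map (fun X => Subtype.val '' X)).foldl Invert D with hD1def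
  have hD1 : IsOriented D1 := foldl_oriented _ hD
  set A : Set V := {u | D1 v u} with hA
  have hvA : v ∉ A := fun hv => hD1 v v hv hv
  set D3 : V → V → Prop := Invert (Invert D1 A) (A ∪ {v}) with hD3def
  refine ⟨Xs.map (fun X => Subtype.val '' X) ++ [A, A ∪ {v}], by simp, ?_⟩
  have hfold : (Xs.map (fun X => Subtype.val '' X) ++ [A, A ∪ {v}]).foldl Invert D = D3 := by
    rw [List.foldl_append]; rfl
  rw [hfold]
  -- v is a sink in D3
  have hsink : ∀ u, ¬ D3 v u := by
    intro u hu
    have hvX : v ∈ A ∪ {v} := Or.inr rfl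
    rcases hu with ⟨_, huX, h2⟩ | ⟨hn, h2⟩
    · -- h2 : Invert D1 A u v
      rcases huX with huA | huv
      · rcases h2 with ⟨_, hvA', _⟩ | ⟨_, h3⟩
        · exact hvA hvA'
        · exact hD1 v u huA h3
      · -- u = v
        rcases h2 with ⟨_, _, h3⟩ | ⟨_, h3⟩ <;>
          exact hD1 v v (by simpa [Set.mem_singleton_iff.mp huv] using h3)
            (by simpa [Set.mem_singleton_iff.mp huv] using h3)
    · rcases h2 with ⟨hvA', _, _⟩ | ⟨_, h3⟩
      · exact hvA hvA'
      · exact hn ⟨hvX, Or.inl h3⟩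
  -- D3 agrees with D1 away from v
  have hagree : ∀ u w : V, u ≠ v → w ≠ v → (D3 u w ↔ D1 u w) := by
    intro u w hu hw
    have hu' : u ∈ A ∪ {v} ↔ u ∈ A := by simp [hu]
    have hw' : w ∈ A ∪ {v} ↔ w ∈ A := by simp [hw]
    have ho1 := hD1 u w
    have ho2 := hD1 w u
    simp only [hD3def, Invert, hu', hw']
    tauto
  intro x hx
  -- x ≠ v
  obtain ⟨b, hxb, -⟩ := (Relation.TransGen.head'_iff).mp hx
  have hxv : x ≠ v := fun he => hsink b (he ▸ hxb)
  -- transfer the cycle to the restricted digraph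
  have key : ∀ a c : V, Relation.TransGen D3 a c → ∀ (ha : a ≠ v) (hc : c ≠ v),
      Relation.TransGen (fun a b : {u : V // u ≠ v} => D1 a b) ⟨a, ha⟩ ⟨c, hc⟩ := by
    intro a c hac
    induction hac with
    | single hab =>
      intro ha hc
      exact Relation.TransGen.single ((hagree _ _ ha hc).mp hab)
    | tail hab hbc ih =>
      intro ha hc
      rename_i b c'
      have hb : b ≠ v := fun he => hsink c' (he ▸ hbc)
      exact Relation.TransGen.tail (ih ha hb) ((hagree _ _ hb hc).mp hbc)
  have := key x x hx hxv hxv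
  rw [show (fun a b : {u : V // u ≠ v} => D1 a b)
      = Xs.foldl Invert (fun a b : {u : V // u ≠ v} => D a b) from restrict_foldl v Xs D] at this
  exact h _ this

lemma exists_decycling : ∀ (n : ℕ) (V : Type*) [Fintype V], Fintype.card V = n →
    ∀ D : V → V → Prop, IsOriented D → ∃ Xs : List (Set V), IsAcyclic (Xs.foldl Invert D) := by
  intro n
  induction n with
  | zero =>
    intro V _ hcard D _
    have : IsEmpty V := Fintype.card_eq_zero_iff.mp hcard
    exact ⟨[], fun x => (this.false x).elim⟩
  | succ n ih =>
    intro V _ hcard D hD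
    classical
    have : Nonempty V := Fintype.card_pos_iff.mp (by omega)
    obtain ⟨v⟩ := this
    have hcard' : Fintype.card {u : V // u ≠ v} = n := by
      have h1 : Fintype.card {u : V // ¬ u = v} = Fintype.card V - Fintype.card {u : V // u = v} :=
        Fintype.card_subtype_compl _
      rw [Fintype.card_subtype_eq] at h1
      simp only [ne_eq]
      omega
    obtain ⟨Xs, hXs⟩ := ih {u : V // u ≠ v} hcard'
      (fun a b => D a b) (fun a b hab hba => hD a b hab hba)
    obtain ⟨Ys, _, hYs⟩ := step D hD v Xs hXs
    exact ⟨Ys, hYs⟩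

/-- For every digraph `D` and vertex `v`, `inv(D) ≤ inv(D − v) + 2`. -/
theorem invNum_le_invNum_delete_add_two {V : Type*} [Fintype V]
    (D : V → V → Prop) (hD : IsOriented D) (v : V) :
    invNum D ≤ invNum (fun a b : {u : V // u ≠ v} => D a b) + 2 := by
  classical
  set D' : {u : V // u ≠ v} → {u : V // u ≠ v} → Prop := fun a b => D a b with hD'def
  have hD' : IsOriented D' := fun a b hab hba => hD a b hab hba
  set S : Set ℕ := {k | ∃ Xs : List (Set {u : V // u ≠ v}),
      Xs.length = k ∧ IsAcyclic (Xs.foldl Invert D')} with hS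
  have hne : S.Nonempty := by
    obtain ⟨Xs, hXs⟩ := exists_decycling (Fintype.card {u : V // u ≠ v}) _ rfl D' hD'
    exact ⟨Xs.length, Xs, rfl, hXs⟩
  have hmem : invNum D' ∈ S := Nat.sInf_mem hne
  obtain ⟨Xs, hlen, hXs⟩ := hmem
  obtain ⟨Ys, hYlen, hYs⟩ := step D hD v Xs hXs
  exact Nat.sInf_le ⟨Ys, by rw [hYlen, hlen], hYs⟩
end

section
/- For every digraph D, inv(D) ≤ 2·τ(D), where τ(D) is the cycle transversal (feedback vertex set) number of D. -/
/-- The cycle transversal (feedback vertex set) number of a digraph. -/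
noncomputable def tau {V : Type*} (D : V → V → Prop) : ℕ :=
  sInf {k | ∃ S : Finset V, S.card = k ∧
    IsAcyclic (fun a b : {u : V // u ∉ S} => D a b)}

/-!
Inverting `{a} ∪ N⁺(a)` and then `N⁺(a)` reverses exactly the arcs leaving `a` (the arcs
inside `N⁺(a)` are reversed twice), so in an oriented graph it turns `a` into a sink and
changes no arc away from `a`. A sink lies on no cycle, so if `D − (S ∪ {a})` is acyclic then so
is `D' − S` for the new digraph `D'`. By induction on `|S|`, `2 |S|` inversions make `D`
acyclic whenever `D − S` is.
-/

section

variable {V : Type*}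

/-- `D − S`, kept on the whole vertex type. -/
def deleteVerts (D : V → V → Prop) (S : Set V) : V → V → Prop :=
  fun u w => u ∉ S ∧ w ∉ S ∧ D u w

def makeSink (D : V → V → Prop) (a : V) : V → V → Prop :=
  Invert (Invert D {x | x = a ∨ D a x}) {x | D a x}

lemma IsAcyclic.mono {r s : V → V → Prop} (hrs : r ≤ s) (hs : IsAcyclic s) : IsAcyclic r :=
  fun x hx => hs x (Relation.TransGen.mono hrs x x hx)

lemma isAcyclic_of_isAcyclic_subtype {D : V → V → Prop} {S : Set V}
    (hS : IsAcyclic (fun a b : {u : V // u ∉ S} => D a b)) : IsAcyclic (deleteVerts D S) := by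
  have lift : ∀ u w, Relation.TransGen (deleteVerts D S) u w → ∀ (hu : u ∉ S) (hw : w ∉ S),
      Relation.TransGen (fun a b : {u : V // u ∉ S} => D a b) ⟨u, hu⟩ ⟨w, hw⟩ := by
    intro u w h
    induction h with
    | single h => exact fun _ _ => .single h.2.2
    | tail _ h ih => exact fun hu _ => (ih hu h.1).tail h.2.2
  intro x hx
  obtain ⟨_, hxy, -⟩ := Relation.TransGen.head'_iff.mp hx
  exact hS ⟨x, hxy.1⟩ (lift x x hx hxy.1 hxy.1)

lemma transGen_deleteVerts_of_isSink {r : V → V → Prop} {a x y : V} (ha : ∀ w, ¬ r a w)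
    (h : Relation.TransGen r x y) (hy : y ≠ a) :
    Relation.TransGen (deleteVerts r {a}) x y := by
  induction h with
  | single h => exact .single ⟨fun hx => ha _ (hx ▸ h), hy, h⟩
  | @tail b c _ hbc ih =>
    have hb : b ≠ a := fun hb => ha _ (hb ▸ hbc)
    exact (ih hb).tail ⟨hb, hy, hbc⟩

lemma isAcyclic_of_isSink {r : V → V → Prop} {a : V} (ha : ∀ w, ¬ r a w)
    (h : IsAcyclic (deleteVerts r {a})) : IsAcyclic r := by
  intro x hx
  obtain ⟨c, hxc, -⟩ := Relation.TransGen.head'_iff.mp hx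
  exact h x (transGen_deleteVerts_of_isSink ha hx fun hxa => ha c (hxa ▸ hxc))

lemma IsOriented.invert {D : V → V → Prop} (hD : IsOriented D) (X : Set V) :
    IsOriented (Invert D X) := by
  intro u v huv hvu
  have := hD u v
  have := hD v u
  unfold Invert at huv hvu
  tauto

lemma IsOriented.makeSink {D : V → V → Prop} (hD : IsOriented D) (a : V) :
    IsOriented (makeSink D a) :=
  (hD.invert _).invert _

lemma not_makeSink_left {D : V → V → Prop} (hD : IsOriented D) (a w : V) :
    ¬ makeSink D a a w := by
  have := hD a w
  have := hD a a
  rcases eq_or_ne w a with rfl | _ <;> simp only [makeSink, Invert, Set.mem_ofPred_eq] <;> tauto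

lemma makeSink_iff_of_ne {D : V → V → Prop} {a u w : V} (hu : u ≠ a) (hw : w ≠ a) :
    makeSink D a u w ↔ D u w := by
  simp only [makeSink, Invert, Set.mem_ofPred_eq]
  tauto

lemma isAcyclic_deleteVerts_makeSink {D : V → V → Prop} (hD : IsOriented D) {a : V}
    {S : Set V} (h : IsAcyclic (deleteVerts D (insert a S))) :
    IsAcyclic (deleteVerts (makeSink D a) S) := by
  refine isAcyclic_of_isSink (a := a) (fun w hw => not_makeSink_left hD a w hw.2.2) ?_
  refine h.mono fun u w ⟨hua, hwa, huS, hwS, huw⟩ => ?_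
  exact ⟨by simp_all, by simp_all, (makeSink_iff_of_ne hua hwa).mp huw⟩

lemma exists_decycling_of_isAcyclic_deleteVerts (S : Finset V) (D : V → V → Prop)
    (hD : IsOriented D) (hS : IsAcyclic (deleteVerts D S)) :
    ∃ Xs : List (Set V), Xs.length = 2 * S.card ∧ IsAcyclic (Xs.foldl Invert D) := by
  classical
  induction S using Finset.induction_on generalizing D with
  | empty => exact ⟨[], rfl, hS.mono fun u w h => ⟨by simp, by simp, h⟩⟩
  | @insert a S ha ih =>
    rw [Finset.coe_insert] at hS
    obtain ⟨Xs, hl, hXs⟩ := ih _ (hD.makeSink a) (isAcyclic_deleteVerts_makeSink hD hS)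
    refine ⟨{x | x = a ∨ D a x} :: {x | D a x} :: Xs, ?_, hXs⟩
    simp only [List.length_cons, hl, Finset.card_insert_of_notMem ha]
    ring

lemma invNum_le_length {D : V → V → Prop} {Xs : List (Set V)}
    (h : IsAcyclic (Xs.foldl Invert D)) : invNum D ≤ Xs.length :=
  Nat.sInf_le ⟨Xs, rfl, h⟩

lemma exists_card_eq_tau [Fintype V] (D : V → V → Prop) :
    ∃ S : Finset V, S.card = tau D ∧ IsAcyclic (fun a b : {u : V // u ∉ S} => D a b) :=
  Nat.sInf_mem (s := {k | ∃ S : Finset V, S.card = k ∧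
    IsAcyclic (fun a b : {u : V // u ∉ S} => D a b)})
    ⟨_, Finset.univ, rfl, fun x => absurd (Finset.mem_univ x.1) x.2⟩

end

/-- For every digraph `D`, `inv(D) ≤ 2·τ(D)`. -/
theorem invNum_le_two_mul_tau {V : Type*} [Fintype V]
    (D : V → V → Prop) (hD : IsOriented D) :
    invNum D ≤ 2 * tau D := by
  obtain ⟨S, hS, hacyc⟩ := exists_card_eq_tau D
  obtain ⟨Xs, hl, hXs⟩ :=
    exists_decycling_of_isAcyclic_deleteVerts S D hD (isAcyclic_of_isAcyclic_subtype hacyc)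
  exact hS ▸ hl ▸ invNum_le_length hXs
end

section
/- For every digraph D, inv(D) ≤ τ'(D), where τ'(D) is the cycle edge-transversal (feedback arc set) number of D. -/
/-- The cycle edge-transversal (feedback arc set) number of a digraph. -/
noncomputable def tauEdge {V : Type*} (D : V → V → Prop) : ℕ :=
  sInf {k | ∃ F : Finset (V × V), F.card = k ∧
    IsAcyclic (fun a b => D a b ∧ (a, b) ∉ F)}

/-!
Fix a linear order of `V` extending the reachability order of the acyclic digraph `D - F`. Every
arc of `D` that goes backwards in this order lies in `F`. Since `D` has no digons, inverting the
two-element set of each backward arc turns exactly that arc around, and inversions of distinct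
pairs do not interact; afterwards every arc goes forwards, so the digraph is acyclic.
-/

section

variable {V : Type*}

def invertPairs (D : V → V → Prop) (S : Set (Sym2 V)) : V → V → Prop :=
  fun u v => (s(u, v) ∈ S ∧ D v u) ∨ (s(u, v) ∉ S ∧ D u v)

theorem invert_pair (D : V → V → Prop) (a b : V) :
    Invert D {a, b} = invertPairs D {s(a, b)} := by
  funext u v
  simp only [Invert, invertPairs, Set.mem_insert_iff, Set.mem_singleton_iff, Sym2.eq_iff,
    eq_iff_iff]
  by_cases huv : u = v
  · subst huv; tauto
  · have hpair :
        ((u = a ∨ u = b) ∧ (v = a ∨ v = b)) ↔ (u = a ∧ v = b ∨ u = b ∧ v = a) := by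
      constructor
      · rintro ⟨rfl | rfl, rfl | rfl⟩ <;> simp_all
      · rintro (⟨rfl, rfl⟩ | ⟨rfl, rfl⟩) <;> simp
    rw [← and_assoc, hpair]

theorem invertPairs_invertPairs (D : V → V → Prop) {S T : Set (Sym2 V)} (hST : Disjoint S T) :
    invertPairs (invertPairs D S) T = invertPairs D (S ∪ T) := by
  funext u v
  have hS : s(u, v) ∈ T → s(u, v) ∉ S := fun h hS => Set.disjoint_left.mp hST hS h
  simp only [invertPairs, Set.mem_union, Sym2.eq_swap (a := v), eq_iff_iff]
  tauto

theorem exists_foldl_invert_eq_invertPairs (D : V → V → Prop) (S : Finset (Sym2 V)) :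
    ∃ Xs : List (Set V), Xs.length = S.card ∧ Xs.foldl Invert D = invertPairs D S := by
  classical
  induction S using Finset.induction_on with
  | empty => exact ⟨[], rfl, by funext u v; simp [invertPairs]⟩
  | insert e S he ih =>
    obtain ⟨Xs, hlen, hfold⟩ := ih
    induction e using Sym2.inductionOn with
    | hf a b =>
      refine ⟨Xs ++ [{a, b}], by simp [hlen, he], ?_⟩
      rw [List.foldl_append, hfold, List.foldl_cons, List.foldl_nil, invert_pair,
        invertPairs_invertPairs _ (by simpa using he), Finset.coe_insert, Set.insert_eq,
        Set.union_comm]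

theorem invNum_le_card_of_isAcyclic_invertPairs {D : V → V → Prop} {S : Finset (Sym2 V)}
    (h : IsAcyclic (invertPairs D S)) : invNum D ≤ S.card := by
  obtain ⟨Xs, hlen, hfold⟩ := exists_foldl_invert_eq_invertPairs D S
  exact Nat.sInf_le ⟨Xs, hlen, hfold ▸ h⟩

theorem isAcyclic_of_forall_lt [Preorder V] {R : V → V → Prop} (h : ∀ a b, R a b → a < b) :
    IsAcyclic R := by
  intro x hx
  have hlt := Relation.TransGen.mono (p := fun a b : V => a < b) h x x hx
  rw [Relation.transGen_eq_self] at hlt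
  exact lt_irrefl x hlt

theorem IsAcyclic.exists_linearOrder {R : V → V → Prop} (hR : IsAcyclic R) :
    ∃ _ : LinearOrder V, ∀ a b, R a b → a < b := by
  let _ : PartialOrder V :=
    { le := Relation.ReflTransGen R
      le_refl := fun _ => .refl
      le_trans := fun _ _ _ => .trans
      le_antisymm := fun a b hab hba => by
        by_contra hne
        exact hR a (Relation.TransGen.trans_right hab
          ((Relation.reflTransGen_iff_eq_or_transGen.mp hba).resolve_left hne)) }
  refine ⟨(inferInstance : LinearOrder (LinearExtension V)), fun a b hab => ?_⟩
  refine lt_of_le_of_ne (toLinearExtension.monotone (Relation.ReflTransGen.single hab)) ?_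
  rintro rfl
  exact hR a (.single hab)

theorem IsOriented.lt_of_invertPairs [LinearOrder V] {D : V → V → Prop} (hD : IsOriented D)
    {S : Set (Sym2 V)} (hS : ∀ u v, D u v → (s(u, v) ∈ S ↔ v < u)) {u v : V}
    (h : invertPairs D S u v) : u < v := by
  rcases h with ⟨hmem, hvu⟩ | ⟨hnot, huv⟩
  · exact (hS v u hvu).mp (Sym2.eq_swap ▸ hmem)
  · refine lt_of_le_of_ne (not_lt.mp fun hvu => hnot ((hS u v huv).mpr hvu)) ?_
    rintro rfl
    exact hD u u huv huv

theorem invNum_le_card_of_isAcyclic_diff {D : V → V → Prop} (hD : IsOriented D)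
    (F : Finset (V × V)) (hF : IsAcyclic fun a b => D a b ∧ (a, b) ∉ F) :
    invNum D ≤ F.card := by
  classical
  obtain ⟨_, hlt⟩ := hF.exists_linearOrder
  set B := F.filter fun e => D e.1 e.2 ∧ e.2 < e.1
  have hB : ∀ u v, D u v → (s(u, v) ∈ B.image (fun e => s(e.1, e.2)) ↔ v < u) := by
    intro u v huv
    simp only [Finset.mem_image, Finset.mem_filter, B, Sym2.eq_iff]
    constructor
    · rintro ⟨⟨a, b⟩, ⟨-, hab, hba⟩, ⟨rfl, rfl⟩ | ⟨rfl, rfl⟩⟩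
      · exact hba
      · exact absurd hab (hD _ _ huv)
    · intro hvu
      refine ⟨(u, v), ⟨?_, huv, hvu⟩, .inl ⟨rfl, rfl⟩⟩
      by_contra hF'
      exact (hlt u v ⟨huv, hF'⟩).asymm hvu
  calc invNum D ≤ (B.image fun e => s(e.1, e.2)).card :=
        invNum_le_card_of_isAcyclic_invertPairs
          (isAcyclic_of_forall_lt fun _ _ => hD.lt_of_invertPairs hB)
    _ ≤ B.card := Finset.card_image_le
    _ ≤ F.card := Finset.card_filter_le _ _

theorem exists_card_eq_tauEdge [Finite V] (D : V → V → Prop) :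
    ∃ F : Finset (V × V), F.card = tauEdge D ∧
      IsAcyclic fun a b => D a b ∧ (a, b) ∉ F := by
  have := Fintype.ofFinite V
  refine Nat.sInf_mem (s := {k | ∃ F : Finset (V × V), F.card = k ∧
    IsAcyclic fun a b => D a b ∧ (a, b) ∉ F}) ?_
  refine ⟨_, Finset.univ, rfl, fun x hx => ?_⟩
  obtain ⟨_, _, _, hnot⟩ := Relation.TransGen.tail'_iff.mp hx
  exact hnot (Finset.mem_univ _)

end

/-- For every digraph `D`, `inv(D) ≤ τ'(D)`. -/
theorem invNum_le_tauEdge {V : Type*} [Fintype V]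
    (D : V → V → Prop) (hD : IsOriented D) :
    invNum D ≤ tauEdge D := by
  obtain ⟨F, hcard, hF⟩ := exists_card_eq_tauEdge D
  exact hcard ▸ invNum_le_card_of_isAcyclic_diff hD F hF
end

section
/- The number of labelled tournaments on n vertices with inversion number at most k−1 is at most n! · 2^{n(k−1)}. -/
section Inversion

variable {V : Type*}

@[simp]
lemma invert_invert (D : V → V → Prop) (X : Set V) : Invert (Invert D X) X = D := by
  funext u v
  by_cases hu : u ∈ X <;> by_cases hv : v ∈ X <;> simp [Invert, hu, hv]

@[simp]
lemma invert_empty (D : V → V → Prop) : Invert D ∅ = D := by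
  funext u v
  simp [Invert]

lemma foldl_invert_replicate_empty (D : V → V → Prop) (j : ℕ) :
    (List.replicate j ∅).foldl Invert D = D := by
  induction j with
  | zero => rfl
  | succ j ih => rw [List.replicate_succ, List.foldl_cons, invert_empty, ih]

lemma foldl_invert_reverse (D : V → V → Prop) (Xs : List (Set V)) :
    Xs.reverse.foldl Invert (Xs.foldl Invert D) = D := by
  induction Xs generalizing D with
  | nil => rfl
  | cons X Xs ih => simp [ih]

lemma IsTournament.irrefl {T : V → V → Prop} (hT : IsTournament T) (u : V) : ¬ T u u :=
  fun h => hT.1 u u h h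

lemma IsTournament.invert {T : V → V → Prop} (hT : IsTournament T) (X : Set V) :
    IsTournament (Invert T X) := by
  obtain ⟨hasymm, htotal⟩ := hT
  constructor
  · intro u v
    have := hasymm u v
    have := hasymm v u
    by_cases hu : u ∈ X <;> by_cases hv : v ∈ X <;> simp_all [Invert]
  · intro u v huv
    have := htotal u v huv
    have := htotal v u huv.symm
    by_cases hu : u ∈ X <;> by_cases hv : v ∈ X <;> simp_all [Invert]

lemma IsTournament.foldl_invert {T : V → V → Prop} (hT : IsTournament T) (Xs : List (Set V)) :
    IsTournament (Xs.foldl Invert T) := by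
  induction Xs generalizing T with
  | nil => exact hT
  | cons X Xs ih => exact ih (hT.invert X)

lemma IsTournament.eq_of_le {T T' : V → V → Prop} (hT : IsTournament T) (hT' : IsTournament T')
    (h : ∀ u v, T u v → T' u v) : T = T' := by
  funext u v
  refine propext ⟨h u v, fun h' => ?_⟩
  have huv : u ≠ v := by rintro rfl; exact hT'.irrefl u h'
  exact (hT.2 u v huv).resolve_right fun hvu => hT'.1 u v h' (h v u hvu)

lemma IsTournament.disagreements_invert_pair_subset {T T' : V → V → Prop}
    (hT : IsTournament T) (hT' : IsTournament T') {u v : V} (huv : T u v) (hT'uv : ¬ T' u v) :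
    {p : V × V | Invert T {u, v} p.1 p.2 ∧ ¬ T' p.1 p.2} ⊆
      {p : V × V | T p.1 p.2 ∧ ¬ T' p.1 p.2} \ {(u, v)} := by
  have hne : u ≠ v := by rintro rfl; exact hT.irrefl u huv
  rintro ⟨a, b⟩ ⟨hab | ⟨hnot, hab⟩, hT'ab⟩
  · obtain ⟨ha, hb, hba⟩ := hab
    simp only [Set.mem_insert_iff, Set.mem_singleton_iff] at ha hb
    rcases ha with rfl | rfl <;> rcases hb with rfl | rfl
    · exact absurd hba (hT.irrefl _)
    · exact absurd hba (hT.1 _ _ huv)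
    · exact absurd ((hT'.2 _ _ hne).resolve_left hT'uv) hT'ab
    · exact absurd hba (hT.irrefl _)
  · refine ⟨⟨hab, hT'ab⟩, ?_⟩
    rintro ⟨⟩
    exact hnot ⟨Set.mem_insert _ _, Set.mem_insert_of_mem _ rfl⟩

lemma IsTournament.exists_foldl_invert_eq [Finite V] {T T' : V → V → Prop}
    (hT : IsTournament T) (hT' : IsTournament T') :
    ∃ Xs : List (Set V), Xs.foldl Invert T = T' := by
  induction hN : {p : V × V | T p.1 p.2 ∧ ¬ T' p.1 p.2}.ncard using Nat.strong_induction_on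
    generalizing T with
  | _ N ih =>
  obtain hempty | ⟨⟨u, v⟩, huv, hT'uv⟩ :=
    {p : V × V | T p.1 p.2 ∧ ¬ T' p.1 p.2}.eq_empty_or_nonempty
  · refine ⟨[], hT.eq_of_le hT' fun u v h => ?_⟩
    by_contra h'
    exact Set.eq_empty_iff_forall_notMem.mp hempty (u, v) ⟨h, h'⟩
  · have hlt := Set.ncard_lt_ncard (Set.ssubset_of_subset_of_ssubset
      (hT.disagreements_invert_pair_subset hT' huv hT'uv)
      (Set.sdiff_singleton_ssubset.mpr ⟨huv, hT'uv⟩))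
    obtain ⟨Xs, hXs⟩ := ih _ (hN ▸ hlt) (hT.invert {u, v}) rfl
    exact ⟨{u, v} :: Xs, hXs⟩

end Inversion

section Acyclic

variable {V : Type*}

lemma isAcyclic_lt_comp {α : Type*} [Preorder α] (f : V → α) :
    IsAcyclic fun u v => f u < f v := by
  intro x hx
  have hlt : Relation.TransGen (· < ·) (f x) (f x) :=
    Relation.TransGen.lift f (fun _ _ h => h) x x hx
  rw [Relation.transGen_eq_self] at hlt
  exact lt_irrefl _ hlt

lemma isTournament_lt_comp {α : Type*} [LinearOrder α] {f : V → α}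
    (hf : Function.Injective f) :
    IsTournament fun u v => f u < f v :=
  ⟨fun _ _ => lt_asymm, fun _ _ huv => (hf.ne huv).lt_or_gt⟩

lemma IsTournament.exists_isAcyclic_foldl_invert [Finite V] {T : V → V → Prop}
    (hT : IsTournament T) : ∃ Xs : List (Set V), IsAcyclic (Xs.foldl Invert T) := by
  obtain ⟨n, ⟨e⟩⟩ := Finite.exists_equiv_fin V
  obtain ⟨Xs, hXs⟩ := hT.exists_foldl_invert_eq (isTournament_lt_comp e.injective)
  exact ⟨Xs, hXs ▸ isAcyclic_lt_comp e⟩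

lemma IsTournament.isStrictTotalOrder {T : V → V → Prop} (hT : IsTournament T)
    (hA : IsAcyclic T) : IsStrictTotalOrder V T where
  irrefl := hT.irrefl
  trans a b c hab hbc := by
    by_cases hac : a = c
    · subst hac
      exact absurd (.head hab (.single hbc)) (hA a)
    · exact (hT.2 a c hac).resolve_right fun hca => hA a (.head hab (.head hbc (.single hca)))
  trichotomous a b hab hba := by
    by_contra hne
    exact (hT.2 a b hne).elim hab hba

lemma IsTournament.exists_equiv_fin_of_isAcyclic [Fintype V] {m : ℕ} (hV : Fintype.card V = m)
    {T : V → V → Prop} (hT : IsTournament T) (hA : IsAcyclic T) :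
    ∃ e : V ≃ Fin m, T = fun u v => e u < e v := by
  classical
  have := hT.isStrictTotalOrder hA
  let _ : LinearOrder V := linearOrderOfSTO T
  let e := (Fintype.orderIsoFinOfCardEq V hV).symm
  refine ⟨e.toEquiv, ?_⟩
  funext u v
  exact propext e.lt_iff_lt.symm

end Acyclic

lemma exists_length_eq_isAcyclic_foldl_invert {V : Type*} {D : V → V → Prop}
    (hD : ∃ Xs : List (Set V), IsAcyclic (Xs.foldl Invert D)) {m : ℕ} (h : invNum D ≤ m) :
    ∃ Xs : List (Set V), Xs.length = m ∧ IsAcyclic (Xs.foldl Invert D) := by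
  obtain ⟨Xs₀, hXs₀⟩ := hD
  obtain ⟨Xs, hlen, hA⟩ := Nat.sInf_mem
    (s := {k | ∃ Xs : List (Set V), Xs.length = k ∧ IsAcyclic (Xs.foldl Invert D)})
    ⟨_, Xs₀, rfl, hXs₀⟩
  have hle : Xs.length ≤ m := hlen ▸ h
  refine ⟨Xs ++ List.replicate (m - Xs.length) ∅, by simp; omega, ?_⟩
  rwa [List.foldl_append, foldl_invert_replicate_empty]

lemma IsTournament.exists_perm_foldl_invert_eq {n m : ℕ} {T : Fin n → Fin n → Prop}
    (hT : IsTournament T) (h : invNum T ≤ m) :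
    ∃ (σ : Equiv.Perm (Fin n)) (Xs : List.Vector (Set (Fin n)) m),
      Xs.toList.foldl Invert (fun u v => σ u < σ v) = T := by
  obtain ⟨Xs, hlen, hA⟩ := exists_length_eq_isAcyclic_foldl_invert
    hT.exists_isAcyclic_foldl_invert h
  obtain ⟨σ, hσ⟩ := (hT.foldl_invert Xs).exists_equiv_fin_of_isAcyclic (Fintype.card_fin n) hA
  refine ⟨σ, ⟨Xs.reverse, by simp [hlen]⟩, ?_⟩
  rw [List.Vector.toList_mk, ← hσ, foldl_invert_reverse]

theorem card_tournaments_invNum_le_general {n k : ℕ} :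
    Nat.card {T : Fin n → Fin n → Prop // IsTournament T ∧ invNum T ≤ k - 1} ≤
      n.factorial * 2 ^ (n * (k - 1)) := by
  let build (p : Equiv.Perm (Fin n) × List.Vector (Set (Fin n)) (k - 1)) :
      Fin n → Fin n → Prop :=
    p.2.toList.foldl Invert fun u v => p.1 u < p.1 v
  have hsub : {T | IsTournament T ∧ invNum T ≤ k - 1} ⊆ Set.range build := by
    rintro T ⟨hT, hinv⟩
    obtain ⟨σ, Xs, h⟩ := hT.exists_perm_foldl_invert_eq hinv
    exact ⟨(σ, Xs), h⟩
  calc Nat.card {T : Fin n → Fin n → Prop // IsTournament T ∧ invNum T ≤ k - 1}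
      ≤ Nat.card (Set.range build) := Nat.card_mono (Set.finite_range _) hsub
    _ ≤ Nat.card (Equiv.Perm (Fin n) × List.Vector (Set (Fin n)) (k - 1)) :=
      Finite.card_range_le build
    _ = n.factorial * 2 ^ (n * (k - 1)) := by
      simp [Nat.card_eq_fintype_card, Fintype.card_perm, Fintype.card_set, pow_mul]

/-- The number of labelled tournaments on `n` vertices with inversion number at
most `k − 1` is at most `n! · 2^{n(k−1)}`. -/
theorem card_tournaments_invNum_le {n k : ℕ} (hk : 1 ≤ k) :
    Nat.card {T : Fin n → Fin n → Prop // IsTournament T ∧ invNum T ≤ k - 1} ≤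
      n.factorial * 2 ^ (n * (k - 1)) :=
  card_tournaments_invNum_le_general
end

section
/- For all n ∈ ℕ₀, inv(n) ≤ n − log₂(n+1), where inv(n) is the maximum inversion number of an n-vertex tournament. -/
/-- The maximum inversion number of an `n`-vertex tournament. -/
noncomputable def maxInv (n : ℕ) : ℕ :=
  sSup {m | ∃ T : Fin n → Fin n → Prop, IsTournament T ∧ invNum T = m}

namespace InvAux

variable {α : Type*}

attribute [local instance] Classical.propDecidable

/-- Asymmetry on a finite set of vertices. -/
def AsymOn (s : Finset α) (D : α → α → Prop) : Prop :=
  ∀ u ∈ s, ∀ v ∈ s, D u v → ¬ D v u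

/-- Totality on a finite set of vertices. -/
def TotalOn (s : Finset α) (D : α → α → Prop) : Prop :=
  ∀ u ∈ s, ∀ v ∈ s, u ≠ v → D u v ∨ D v u

/-- The recursive bound `h(n) = ⌊(n-1)/2⌋ + h(⌈(n-1)/2⌉)`. -/
def hFun (n : ℕ) : ℕ :=
  if h : n ≤ 1 then 0 else (n - 1) / 2 + hFun (n / 2)
decreasing_by omega

lemma hFun_le_log (n : ℕ) : (hFun n : ℝ) ≤ (n : ℝ) - Real.logb 2 ((n : ℝ) + 1) := by
  induction n using Nat.strong_induction_on with
  | _ n ih =>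
    rcases le_or_gt n 1 with h1 | h1
    · interval_cases n
      · rw [hFun, dif_pos (by norm_num)]; simp
      · rw [hFun, dif_pos (by norm_num)]
        rw [show ((1:ℕ):ℝ) + 1 = 2 by norm_num, Real.logb_self_eq_one (by norm_num)]
        norm_num
    · rw [hFun, dif_neg (by omega)]
      have hrec := ih (n / 2) (by omega)
      push_cast
      have hkey : Real.logb 2 ((n : ℝ) + 1) ≤ 1 + Real.logb 2 ((n / 2 : ℕ) + 1) := by
        have h3 : n + 1 ≤ 2 * (n / 2) + 2 := by omega
        have h2 : ((n : ℝ) + 1) ≤ 2 * (((n / 2 : ℕ) : ℝ) + 1) := by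
          have := (Nat.cast_le (α := ℝ)).mpr h3
          push_cast at this; linarith
        calc Real.logb 2 ((n : ℝ) + 1) ≤ Real.logb 2 (2 * (((n / 2 : ℕ) : ℝ) + 1)) :=
              Real.logb_le_logb_of_le (by norm_num) (by positivity) h2
          _ = 1 + Real.logb 2 (((n / 2 : ℕ) : ℝ) + 1) := by
              rw [Real.logb_mul (by norm_num) (by positivity),
                Real.logb_self_eq_one (by norm_num)]
      have harith : (((n - 1) / 2 : ℕ) : ℝ) + ((n / 2 : ℕ) : ℝ) = (n : ℝ) - 1 := by
        have h4 : (n - 1) / 2 + n / 2 + 1 = n := by omega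
        have := (Nat.cast_inj (R := ℝ)).mpr h4
        push_cast at this; linarith
      linarith [hrec, hkey, harith]

lemma invert_iff (D : α → α → Prop) (X : Set α) (u v : α) :
    Invert D X u v ↔ if u ∈ X ∧ v ∈ X then D v u else D u v := by
  unfold Invert
  by_cases h : u ∈ X ∧ v ∈ X
  · simp only [if_pos h]; tauto
  · simp only [if_neg h]; tauto

lemma invert_notmem {D : α → α → Prop} {X : Set α} {v : α} (hv : v ∉ X) (w : α) :
    (Invert D X v w ↔ D v w) ∧ (Invert D X w v ↔ D w v) := by
  constructor
  · rw [invert_iff, if_neg (fun h => hv h.1)]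
  · rw [invert_iff, if_neg (fun h => hv h.2)]

lemma asymOn_invert {s : Finset α} {D : α → α → Prop} (h : AsymOn s D) (X : Set α) :
    AsymOn s (Invert D X) := by
  intro u hu v hv huv hvu
  rw [invert_iff] at huv hvu
  by_cases hX : u ∈ X ∧ v ∈ X
  · rw [if_pos hX] at huv
    rw [if_pos ⟨hX.2, hX.1⟩] at hvu
    exact h v hv u hu huv hvu
  · rw [if_neg hX] at huv
    rw [if_neg (fun hc => hX ⟨hc.2, hc.1⟩)] at hvu
    exact h u hu v hv huv hvu

lemma totalOn_invert {s : Finset α} {D : α → α → Prop} (h : TotalOn s D) (X : Set α) :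
    TotalOn s (Invert D X) := by
  intro u hu v hv huv
  rw [invert_iff, invert_iff]
  by_cases hX : u ∈ X ∧ v ∈ X
  · rw [if_pos hX, if_pos ⟨hX.2, hX.1⟩]
    exact (h u hu v hv huv).symm.imp id id
  · rw [if_neg hX, if_neg (fun hc => hX ⟨hc.2, hc.1⟩)]
    exact h u hu v hv huv

lemma asymOn_foldl {s : Finset α} {D : α → α → Prop} (h : AsymOn s D) (Xs : List (Set α)) :
    AsymOn s (Xs.foldl Invert D) := by
  induction Xs generalizing D with
  | nil => exact h
  | cons X Xs ih => exact ih (asymOn_invert h X)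

lemma totalOn_foldl {s : Finset α} {D : α → α → Prop} (h : TotalOn s D) (Xs : List (Set α)) :
    TotalOn s (Xs.foldl Invert D) := by
  induction Xs generalizing D with
  | nil => exact h
  | cons X Xs ih => exact ih (totalOn_invert h X)

lemma foldl_notmem {Xs : List (Set α)} {v : α} (hv : ∀ X ∈ Xs, v ∉ X)
    (D : α → α → Prop) (w : α) :
    (Xs.foldl Invert D v w ↔ D v w) ∧ (Xs.foldl Invert D w v ↔ D w v) := by
  induction Xs generalizing D with
  | nil => exact ⟨Iff.rfl, Iff.rfl⟩
  | cons X Xs ih =>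
    have h1 := invert_notmem (D := D) (X := X) (hv X (by simp)) w
    have h2 := ih (fun Y hY => hv Y (by simp [hY])) (Invert D X)
    exact ⟨h2.1.trans h1.1, h2.2.trans h1.2⟩

lemma asymOn_mono {s t : Finset α} {D : α → α → Prop} (hts : t ⊆ s) (h : AsymOn s D) :
    AsymOn t D := fun u hu v hv => h u (hts hu) v (hts hv)

lemma totalOn_mono {s t : Finset α} {D : α → α → Prop} (hts : t ⊆ s) (h : TotalOn s D) :
    TotalOn t D := fun u hu v hv => h u (hts hu) v (hts hv)

open Classical in
/-- With one inversion, make `u` a sink of `act`. The inversion set consists of `u`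
and out-neighbours of `u` only. -/
lemma make_sink {act : Finset α} {D : α → α → Prop} {u : α}
    (hT : TotalOn act D) (hu : u ∈ act) :
    ∃ X : Set α, X ⊆ ↑act ∧ (∀ w, w ∈ X → w = u ∨ D u w) ∧
      (∀ w ∈ act.erase u, Invert D X w u) := by
  refine ⟨↑(insert u ((act.erase u).filter (fun w => D u w))), ?_, ?_, ?_⟩
  · intro w hw
    simp only [Finset.coe_insert, Set.mem_insert_iff, Finset.coe_filter, Set.mem_setOf_eq,
      Finset.mem_erase] at hw
    rcases hw with rfl | ⟨⟨_, hw⟩, _⟩ <;> simpa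
  · intro w hw
    simp only [Finset.coe_insert, Set.mem_insert_iff, Finset.coe_filter, Set.mem_setOf_eq,
      Finset.mem_erase] at hw
    rcases hw with rfl | ⟨_, hw⟩
    · exact Or.inl rfl
    · exact Or.inr hw
  · intro w hw
    rw [Finset.mem_erase] at hw
    rw [invert_iff]
    by_cases hD : D u w
    · rw [if_pos ?_]
      · exact hD
      · constructor <;> simp [hw.1, hw.2, hD, hu, Finset.mem_erase]
    · rw [if_neg ?_]
      · exact (hT w hw.2 u hu hw.1).resolve_right hD
      · rintro ⟨hwX, -⟩
        simp only [Finset.coe_insert, Set.mem_insert_iff, Finset.coe_filter, Set.mem_setOf_eq,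
          Finset.mem_erase] at hwX
        rcases hwX with rfl | ⟨_, h⟩
        · exact hw.1 rfl
        · exact hD h

open Classical in
/-- With one inversion, make `u` a source of `act`. -/
lemma make_source {act : Finset α} {D : α → α → Prop} {u : α}
    (hT : TotalOn act D) (hu : u ∈ act) :
    ∃ X : Set α, X ⊆ ↑act ∧ (∀ w, w ∈ X → w = u ∨ D w u) ∧
      (∀ w ∈ act.erase u, Invert D X u w) := by
  refine ⟨↑(insert u ((act.erase u).filter (fun w => D w u))), ?_, ?_, ?_⟩
  · intro w hw
    simp only [Finset.coe_insert, Set.mem_insert_iff, Finset.coe_filter, Set.mem_setOf_eq,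
      Finset.mem_erase] at hw
    rcases hw with rfl | ⟨⟨_, hw⟩, _⟩ <;> simpa
  · intro w hw
    simp only [Finset.coe_insert, Set.mem_insert_iff, Finset.coe_filter, Set.mem_setOf_eq,
      Finset.mem_erase] at hw
    rcases hw with rfl | ⟨_, hw⟩
    · exact Or.inl rfl
    · exact Or.inr hw
  · intro w hw
    rw [Finset.mem_erase] at hw
    rw [invert_iff]
    by_cases hD : D w u
    · rw [if_pos ?_]
      · exact hD
      · constructor <;> simp [hw.1, hw.2, hD, hu, Finset.mem_erase]
    · rw [if_neg ?_]
      · exact (hT u hu w hw.2 (Ne.symm hw.1)).resolve_right hD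
      · rintro ⟨-, hwX⟩
        simp only [Finset.coe_insert, Set.mem_insert_iff, Finset.coe_filter, Set.mem_setOf_eq,
          Finset.mem_erase] at hwX
        rcases hwX with rfl | ⟨_, h⟩
        · exact hw.1 rfl
        · exact hD h

/-- Peel off the vertices of `B` one by one, making each of them a source or a sink of
the remaining active tournament, without ever touching edges at `v`. -/
lemma absorb : ∀ (k : ℕ) (B act : Finset α) (D : α → α → Prop) (v : α) (C : Finset α),
    B.card = k → B ⊆ act → v ∈ act → v ∉ B → C ⊆ act → v ∉ C → Disjoint B C →
    (∀ w ∈ act, w ∉ B → w ≠ v → w ∈ C) →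
    AsymOn act D → TotalOn act D →
    (∀ w ∈ C, D v w) →
    ∃ Xs₁ : List (Set α), Xs₁.length ≤ k ∧ (∀ X ∈ Xs₁, X ⊆ ↑act) ∧ (∀ X ∈ Xs₁, v ∉ X) ∧
      ∀ (Xs₂ : List (Set α)) (f₂ : α → ℚ),
        (∀ X ∈ Xs₂, X ⊆ ↑C) →
        (∀ a ∈ insert v C, ∀ b ∈ insert v C,
            (Xs₂.foldl Invert (Xs₁.foldl Invert D)) a b → f₂ a < f₂ b) →
        ∃ f : α → ℚ, ∀ a ∈ act, ∀ b ∈ act,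
            ((Xs₁ ++ Xs₂).foldl Invert D) a b → f a < f b := by
  intro k
  induction k with
  | zero =>
    intro B act D v C hcard hB hv hvB hC hvC hBC hpart hA hT hvdom
    have hBempty : B = ∅ := Finset.card_eq_zero.mp hcard
    refine ⟨[], by simp, by simp, by simp, ?_⟩
    intro Xs₂ f₂ hsub₂ hf₂
    refine ⟨f₂, ?_⟩
    intro a ha b hb hab
    have hmem : ∀ x ∈ act, x ∈ insert v C := by
      intro x hx
      by_cases hxv : x = v
      · simp [hxv]
      · exact Finset.mem_insert_of_mem (hpart x hx (by simp [hBempty]) hxv)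
    exact hf₂ a (hmem a ha) b (hmem b hb) hab
  | succ k ih =>
    intro B act D v C hcard hB hv hvB hC hvC hBC hpart hA hT hvdom
    obtain ⟨u, hu⟩ : B.Nonempty := Finset.card_pos.mp (by omega)
    have huact : u ∈ act := hB hu
    have huv : u ≠ v := fun h => hvB (h ▸ hu)
    have huC : u ∉ C := fun h => (Finset.disjoint_left.mp hBC) hu h
    -- choose the inversion set placing u
    have hkey : ∃ X : Set α, X ⊆ ↑act ∧ v ∉ X ∧
        ((∀ w ∈ act.erase u, Invert D X w u) ∨ (∀ w ∈ act.erase u, Invert D X u w)) := by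
      by_cases hvu : D v u
      · obtain ⟨X, h1, h2, h3⟩ := make_sink hT huact
        refine ⟨X, h1, ?_, Or.inl h3⟩
        intro hvX
        rcases h2 v hvX with h | h
        · exact huv h.symm
        · exact hA v hv u huact hvu h
      · have huv' : D u v := (hT u huact v hv huv).resolve_right hvu
        obtain ⟨X, h1, h2, h3⟩ := make_source hT huact
        refine ⟨X, h1, ?_, Or.inr h3⟩
        intro hvX
        rcases h2 v hvX with h | h
        · exact huv h.symm
        · exact hvu h
    obtain ⟨X, hXsub, hvX, hXext⟩ := hkey
    set D₁ := Invert D X with hD₁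
    have hA₁ : AsymOn act D₁ := asymOn_invert hA X
    have hT₁ : TotalOn act D₁ := totalOn_invert hT X
    set act' := act.erase u with hact'
    set B' := B.erase u with hB'
    have hsub_act' : act' ⊆ act := Finset.erase_subset u act
    obtain ⟨Xs', hlen', hsub', hvX', hcont'⟩ :=
      ih B' act' D₁ v C
        (by rw [hB', Finset.card_erase_of_mem hu]; omega)
        (Finset.erase_subset_erase u hB)
        (Finset.mem_erase.mpr ⟨Ne.symm huv, hv⟩)
        (fun h => hvB (Finset.mem_of_mem_erase h))
        (fun w hw => Finset.mem_erase.mpr ⟨fun h => huC (h ▸ hw), hC hw⟩)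
        hvC
        (Finset.disjoint_of_subset_left (Finset.erase_subset u B) hBC)
        (by
          intro w hw hwB' hwv
          have hwact : w ∈ act := hsub_act' hw
          have hwu : w ≠ u := (Finset.mem_erase.mp hw).1
          refine hpart w hwact ?_ hwv
          intro hwB
          exact hwB' (Finset.mem_erase.mpr ⟨hwu, hwB⟩))
        (asymOn_mono hsub_act' hA₁)
        (totalOn_mono hsub_act' hT₁)
        (fun w hw => ((invert_notmem hvX w).1).mpr (hvdom w hw))
    refine ⟨X :: Xs', by simpa using Nat.succ_le_succ hlen', ?_, ?_, ?_⟩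
    · intro Y hY
      rcases List.mem_cons.mp hY with rfl | hY'
      · exact hXsub
      · exact (hsub' Y hY').trans (by exact_mod_cast hsub_act')
    · intro Y hY
      rcases List.mem_cons.mp hY with rfl | hY'
      · exact hvX
      · exact hvX' Y hY'
    · intro Xs₂ f₂ hsub₂ hf₂
      have hfold : (X :: Xs').foldl Invert D = Xs'.foldl Invert D₁ := rfl
      obtain ⟨f', hf'⟩ := hcont' Xs₂ f₂ hsub₂ (by rw [← hfold]; exact hf₂)
      have hunot : ∀ Y ∈ Xs' ++ Xs₂, u ∉ Y := by
        intro Y hY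
        rcases List.mem_append.mp hY with hY' | hY'
        · intro huY
          have hmem := hsub' Y hY' huY
          exact Finset.notMem_erase u act (by exact_mod_cast hmem)
        · intro huY
          exact huC (by exact_mod_cast hsub₂ Y hY' huY)
      have hFeq : ((X :: Xs') ++ Xs₂).foldl Invert D = (Xs' ++ Xs₂).foldl Invert D₁ := rfl
      set F := (Xs' ++ Xs₂).foldl Invert D₁ with hF
      have hFu : ∀ w, (F u w ↔ D₁ u w) ∧ (F w u ↔ D₁ w u) := foldl_notmem hunot D₁
      have hvact' : v ∈ act' := Finset.mem_erase.mpr ⟨Ne.symm huv, hv⟩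
      have himg : (act'.image f').Nonempty := ⟨f' v, Finset.mem_image_of_mem f' hvact'⟩
      have hAF : AsymOn act F := asymOn_foldl hA₁ (Xs' ++ Xs₂)
      rcases hXext with hsink | hsource
      · -- u is a sink: put it at the top
        refine ⟨fun w => if w = u then (act'.image f').max' himg + 1 else f' w, ?_⟩
        intro a ha b hb hab
        rw [hFeq] at hab
        beta_reduce
        by_cases hau : a = u <;> by_cases hbu : b = u
        · rw [hau, hbu] at hab
          exact absurd hab (fun h => hAF u huact u huact h h)
        · rw [hau] at hab
          have hbe : b ∈ act.erase u := Finset.mem_erase.mpr ⟨hbu, hb⟩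
          have h1 : D₁ b u := hsink b hbe
          have h2 : D₁ u b := (hFu b).1.mp hab
          exact absurd h2 (hA₁ b (hsub_act' hbe) u huact h1)
        · rw [if_neg hau, if_pos hbu]
          have : f' a ≤ (act'.image f').max' himg :=
            Finset.le_max' _ _ (Finset.mem_image_of_mem f' (Finset.mem_erase.mpr ⟨hau, ha⟩))
          linarith
        · rw [if_neg hau, if_neg hbu]
          exact hf' a (Finset.mem_erase.mpr ⟨hau, ha⟩) b (Finset.mem_erase.mpr ⟨hbu, hb⟩) hab
      · -- u is a source: put it at the bottom
        refine ⟨fun w => if w = u then (act'.image f').min' himg - 1 else f' w, ?_⟩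
        intro a ha b hb hab
        rw [hFeq] at hab
        beta_reduce
        by_cases hau : a = u <;> by_cases hbu : b = u
        · rw [hau, hbu] at hab
          exact absurd hab (fun h => hAF u huact u huact h h)
        · rw [if_pos hau, if_neg hbu]
          have : (act'.image f').min' himg ≤ f' b :=
            Finset.min'_le _ _ (Finset.mem_image_of_mem f' (Finset.mem_erase.mpr ⟨hbu, hb⟩))
          linarith
        · rw [hbu] at hab
          have hae : a ∈ act.erase u := Finset.mem_erase.mpr ⟨hau, ha⟩
          have h1 : D₁ u a := hsource a hae
          have h2 : D₁ a u := (hFu a).2.mp hab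
          exact absurd h2 (hA₁ u huact a (hsub_act' hae) h1)
        · rw [if_neg hau, if_neg hbu]
          exact hf' a (Finset.mem_erase.mpr ⟨hau, ha⟩) b (Finset.mem_erase.mpr ⟨hbu, hb⟩) hab

/-- Every tournament on a vertex with big out-degree exists. -/
lemma exists_big_outdeg {act : Finset α} {D : α → α → Prop} {m : ℕ}
    (hcard : act.card = m) (hA : AsymOn act D) (hT : TotalOn act D) (hm : 2 ≤ m) :
    ∃ v ∈ act, m / 2 ≤ (act.filter (fun w => D v w)).card := by
  by_contra hc
  push_neg at hc
  set S := ∑ v ∈ act, ∑ w ∈ act, (if D v w then 1 else 0) with hS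
  have hfilt : ∑ v ∈ act, (act.filter (fun w => D v w)).card = S := by
    apply Finset.sum_congr rfl
    intro v _
    exact Finset.card_filter _ _
  have hS_le : S ≤ m * (m / 2 - 1) := by
    rw [← hfilt]
    calc ∑ v ∈ act, (act.filter (fun w => D v w)).card
        ≤ ∑ _v ∈ act, (m / 2 - 1) := by
          apply Finset.sum_le_sum
          intro v hv
          have := hc v hv
          omega
      _ = m * (m / 2 - 1) := by rw [Finset.sum_const, hcard, smul_eq_mul]
  have hswap : S = ∑ v ∈ act, ∑ w ∈ act, (if D w v then 1 else 0) := Finset.sum_comm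
  have h2S : 2 * S = ∑ v ∈ act, ∑ w ∈ act,
      ((if D v w then 1 else 0) + (if D w v then 1 else 0)) := by
    rw [two_mul]
    nth_rewrite 2 [hswap]
    rw [hS, ← Finset.sum_add_distrib]
    apply Finset.sum_congr rfl
    intro v _
    rw [← Finset.sum_add_distrib]
  have hlow : ∑ v ∈ act, ∑ w ∈ act, (if v = w then (0:ℕ) else 1) ≤ 2 * S := by
    rw [h2S]
    apply Finset.sum_le_sum
    intro v hv
    apply Finset.sum_le_sum
    intro w hw
    by_cases hvw : v = w
    · simp [hvw]
    · rcases hT v hv w hw hvw with h | h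
      · rw [if_neg hvw, if_pos h]; omega
      · rw [if_neg hvw, if_pos h]; omega
  have hdiag : ∑ v ∈ act, ∑ w ∈ act, (if v = w then (0:ℕ) else 1) = m * (m - 1) := by
    have hone : ∀ v ∈ act, ∑ w ∈ act, (if v = w then (0:ℕ) else 1) = m - 1 := by
      intro v hv
      rw [← Finset.sum_erase_add act _ hv, if_pos rfl]
      have heq : ∑ w ∈ act.erase v, (if v = w then (0:ℕ) else 1)
          = ∑ _w ∈ act.erase v, 1 := by
        apply Finset.sum_congr rfl
        intro w hw
        rw [if_neg (fun h => (Finset.mem_erase.mp hw).1 h.symm)]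
      rw [heq, Finset.sum_const, smul_eq_mul, mul_one, Finset.card_erase_of_mem hv, hcard]
      omega
    rw [Finset.sum_congr rfl hone, Finset.sum_const, hcard, smul_eq_mul]
  rw [hdiag] at hlow
  have h1 : m * (m - 1) ≤ m * (2 * (m / 2 - 1)) := by
    calc m * (m - 1) ≤ 2 * S := hlow
      _ ≤ 2 * (m * (m / 2 - 1)) := by omega
      _ = m * (2 * (m / 2 - 1)) := by ring
  have h2 := Nat.le_of_mul_le_mul_left (by linarith [h1] : m * (m-1) ≤ m * (2 * (m/2 - 1))) (by omega : 0 < m)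
  omega

/-- Main combinatorial lemma: a tournament on an `m`-element set can be sorted
with at most `hFun m` inversions. -/
lemma sort : ∀ (m : ℕ) (act : Finset α) (D : α → α → Prop),
    act.card = m → AsymOn act D → TotalOn act D →
    ∃ Xs : List (Set α), Xs.length ≤ hFun m ∧ (∀ X ∈ Xs, X ⊆ ↑act) ∧
      ∃ f : α → ℚ, ∀ a ∈ act, ∀ b ∈ act, (Xs.foldl Invert D) a b → f a < f b := by
  intro m
  induction m using Nat.strong_induction_on with
  | _ m ih =>
    intro act D hcard hA hT
    rcases le_or_gt m 1 with hm | hm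
    · refine ⟨[], Nat.zero_le _, by simp, 0, ?_⟩
      intro a ha b hb hab
      have hab' : a = b := Finset.card_le_one.mp (by omega) a ha b hb
      rw [hab'] at hab
      exact absurd hab (fun h => hA b hb b hb h h)
    · obtain ⟨v, hv, hvdeg⟩ := exists_big_outdeg hcard hA hT (by omega)
      obtain ⟨C, hCsub, hCcard⟩ :=
        Finset.exists_subset_card_eq (n := m / 2) (s := act.filter (fun w => D v w)) hvdeg
      have hCact : C ⊆ act := hCsub.trans (Finset.filter_subset _ _)
      have hvdom : ∀ w ∈ C, D v w := fun w hw => (Finset.mem_filter.mp (hCsub hw)).2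
      have hvC : v ∉ C := fun h => hA v hv v hv (hvdom v h) (hvdom v h)
      set B := act \ insert v C with hB
      have hvB : v ∉ B := by simp [hB]
      have hBact : B ⊆ act := Finset.sdiff_subset
      have hBC : Disjoint B C :=
        Finset.disjoint_of_subset_right (Finset.subset_insert v C) Finset.sdiff_disjoint
      have hins : insert v C ⊆ act := Finset.insert_subset hv hCact
      have hBcard : B.card = m - 1 - m / 2 := by
        rw [hB, Finset.card_sdiff_of_subset hins, Finset.card_insert_of_notMem hvC, hCcard, hcard]
        omega
      have hpart : ∀ w ∈ act, w ∉ B → w ≠ v → w ∈ C := by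
        intro w hw hwB hwv
        have : w ∈ insert v C := by
          by_contra hc
          exact hwB (Finset.mem_sdiff.mpr ⟨hw, hc⟩)
        rcases Finset.mem_insert.mp this with h | h
        · exact absurd h hwv
        · exact h
      obtain ⟨Xs₁, hlen₁, hsub₁, hvX₁, hcont⟩ :=
        absorb (m - 1 - m / 2) B act D v C hBcard hBact hv hvB hCact hvC hBC hpart hA hT hvdom
      set D₁ := Xs₁.foldl Invert D with hD₁
      obtain ⟨Xs₂, hlen₂, hsub₂, f₃, hf₃⟩ :=
        ih (m / 2) (by omega) C D₁ hCcard
          (asymOn_mono hCact (asymOn_foldl hA Xs₁))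
          (totalOn_mono hCact (totalOn_foldl hT Xs₁))
      have hvnotX₂ : ∀ X ∈ Xs₂, v ∉ X := fun X hX hvmem =>
        hvC (by exact_mod_cast hsub₂ X hX hvmem)
      set D₂ := Xs₂.foldl Invert D₁ with hD₂
      have hvdom₂ : ∀ w ∈ C, D₂ v w := fun w hw =>
        (foldl_notmem hvnotX₂ D₁ w).1.mpr ((foldl_notmem hvX₁ D w).1.mpr (hvdom w hw))
      have hA₂ : AsymOn act D₂ := asymOn_foldl (asymOn_foldl hA Xs₁) Xs₂
      have hCne : C.Nonempty := Finset.card_pos.mp (by omega)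
      have himg : (C.image f₃).Nonempty := hCne.image f₃
      have hf₂ : ∀ a ∈ insert v C, ∀ b ∈ insert v C, D₂ a b →
          (fun x => if x = v then (C.image f₃).min' himg - 1 else f₃ x) a <
          (fun x => if x = v then (C.image f₃).min' himg - 1 else f₃ x) b := by
        intro a ha b hb hab
        beta_reduce
        rcases Finset.mem_insert.mp ha with hav | haC <;>
          rcases Finset.mem_insert.mp hb with hbv | hbC
        · rw [hav, hbv] at hab
          exact absurd hab (fun h => hA₂ v hv v hv h h)
        · have hbv : b ≠ v := fun h => hvC (h ▸ hbC)
          rw [if_pos hav, if_neg hbv]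
          have : (C.image f₃).min' himg ≤ f₃ b :=
            Finset.min'_le _ _ (Finset.mem_image_of_mem f₃ hbC)
          linarith
        · have hav' : a ≠ v := fun h => hvC (h ▸ haC)
          rw [hbv] at hab
          exact absurd hab (fun h => hA₂ v hv a (hCact haC) (hvdom₂ a haC) h)
        · have hav' : a ≠ v := fun h => hvC (h ▸ haC)
          have hbv' : b ≠ v := fun h => hvC (h ▸ hbC)
          rw [if_neg hav', if_neg hbv']
          exact hf₃ a haC b hbC hab
      obtain ⟨f, hf⟩ := hcont Xs₂
        (fun x => if x = v then (C.image f₃).min' himg - 1 else f₃ x) hsub₂ hf₂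
      refine ⟨Xs₁ ++ Xs₂, ?_, ?_, f, hf⟩
      · rw [List.length_append, hFun, dif_neg (by omega : ¬ m ≤ 1)]
        have : m - 1 - m / 2 = (m - 1) / 2 := by omega
        omega
      · intro X hX
        rcases List.mem_append.mp hX with h | h
        · exact hsub₁ X h
        · exact (hsub₂ X h).trans (by exact_mod_cast hCact)

end InvAux

theorem tournament_decyclable {n : ℕ} (T : Fin n → Fin n → Prop) (hT : IsTournament T) :
    ∃ Xs : List (Set (Fin n)), Xs.length ≤ InvAux.hFun n ∧ IsAcyclic (Xs.foldl Invert T) := by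
  obtain ⟨Xs, hlen, -, f, hf⟩ :=
    InvAux.sort n Finset.univ T (by simp) (fun u _ v _ => hT.1 u v)
      (fun u _ v _ h => hT.2 u v h)
  refine ⟨Xs, hlen, ?_⟩
  intro x hx
  have key : ∀ a b, Relation.TransGen (Xs.foldl Invert T) a b → f a < f b := by
    intro a b h
    induction h with
    | single h => exact hf _ (Finset.mem_univ _) _ (Finset.mem_univ _) h
    | tail _ h ihh => exact lt_trans ihh (hf _ (Finset.mem_univ _) _ (Finset.mem_univ _) h)
  exact lt_irrefl _ (key x x hx)

theorem maxInv_le_hFun (n : ℕ) : maxInv n ≤ InvAux.hFun n := by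
  refine csSup_le' ?_
  rintro m ⟨T, hT, rfl⟩
  obtain ⟨Xs, hlen, hacyc⟩ := tournament_decyclable T hT
  calc invNum T ≤ Xs.length := Nat.sInf_le ⟨Xs, rfl, hacyc⟩
    _ ≤ InvAux.hFun n := hlen

/-- For all `n`, `inv(n) ≤ n − log₂(n+1)`. -/
theorem maxInv_le_sub_log (n : ℕ) :
    (maxInv n : ℝ) ≤ (n : ℝ) - Real.logb 2 ((n : ℝ) + 1) := by
  refine le_trans ?_ (InvAux.hFun_le_log n)
  exact_mod_cast maxInv_le_hFun n
end

section
/- Let k ∈ ℕ, let D̂ = [C⃗₃]_k be the k-join of k directed triangles, and suppose X_1,...,X_k is a decycling family of D̂. Then the characteristic vectors u_1,...,u_k (in X_1,...,X_k) of the distinguished vertices u_i in each factor are linearly independent over F_2, where u_i, v_i, w_i are labelled so that u_i v_i w_i is the directed 3-cycle of factor i, the edge u_i w_i undergoes a net reversal under the inversions, and the edge u_i v_i does not. -/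
open Classical in
/-- The characteristic vector of a vertex in the sets `X_1, …, X_k`. -/
noncomputable def charVec {V : Type*} {k : ℕ} (Xs : Fin k → Set V) (x : V) :
    Fin k → ZMod 2 :=
  fun i => if x ∈ Xs i then 1 else 0

/-- The `k`-join `[C⃗₃]_k` of `k` directed triangles: vertex `(i, a)` is the
vertex `a` of the `i`-th factor, all edges go from earlier factors to later
ones, and each factor is a directed 3-cycle. -/
def C3Join (k : ℕ) : Fin k × Fin 3 → Fin k × Fin 3 → Prop :=
  fun u v => u.1 < v.1 ∨ (u.1 = v.1 ∧ v.2 = u.2 + 1)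


section Aux

open Classical

variable {V : Type*}

/-- Parity (in `ZMod 2`) of the number of sets in the list containing both
`x` and `y`. -/
noncomputable def flipPar : List (Set V) → V → V → ZMod 2
  | [], _, _ => 0
  | X :: L, x, y => (if x ∈ X ∧ y ∈ X then 1 else 0) + flipPar L x y

lemma zmod2_em (a : ZMod 2) : a = 0 ∨ a = 1 := by revert a; decide

lemma foldl_invert_iff (L : List (Set V)) (D : V → V → Prop) (x y : V) :
    L.foldl Invert D x y ↔
      ((flipPar L x y = 1 ∧ D y x) ∨ (flipPar L x y ≠ 1 ∧ D x y)) := by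
  induction L generalizing D with
  | nil =>
    have h0 : flipPar ([] : List (Set V)) x y = 0 := rfl
    rw [h0]
    simp
  | cons X L ih =>
    rw [List.foldl_cons, ih]
    have hcons : flipPar (X :: L) x y
        = (if x ∈ X ∧ y ∈ X then 1 else 0) + flipPar L x y := rfl
    by_cases h : x ∈ X ∧ y ∈ X
    · have h' : y ∈ X ∧ x ∈ X := ⟨h.2, h.1⟩
      have e1 : Invert D X y x ↔ D x y := by simp [Invert, h', h]
      have e2 : Invert D X x y ↔ D y x := by simp [Invert, h]
      rw [hcons, if_pos h, e1, e2]
      rcases zmod2_em (flipPar L x y) with hs | hs <;> rw [hs] <;> simp <;> decide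
    · have h' : ¬ (y ∈ X ∧ x ∈ X) := fun c => h ⟨c.2, c.1⟩
      have e1 : Invert D X y x ↔ D y x := by
        constructor
        · rintro (⟨hy, hx, hd⟩ | ⟨_, hd⟩)
          · exact absurd ⟨hy, hx⟩ h'
          · exact hd
        · intro hd; exact Or.inr ⟨h', hd⟩
      have e2 : Invert D X x y ↔ D x y := by
        constructor
        · rintro (⟨hx, hy, hd⟩ | ⟨_, hd⟩)
          · exact absurd ⟨hx, hy⟩ h
          · exact hd
        · intro hd; exact Or.inr ⟨h, hd⟩
      rw [hcons, if_neg h, e1, e2, zero_add]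

lemma foldl_invert_total (L : List (Set V)) (D : V → V → Prop)
    (h : ∀ x y : V, x ≠ y → D x y ∨ D y x) :
    ∀ x y : V, x ≠ y → L.foldl Invert D x y ∨ L.foldl Invert D y x := by
  induction L generalizing D with
  | nil => exact h
  | cons X L ih =>
    refine ih _ ?_
    intro x y hxy
    by_cases hm : x ∈ X ∧ y ∈ X
    · rcases h x y hxy with h' | h'
      · exact Or.inr (Or.inl ⟨hm.2, hm.1, h'⟩)
      · exact Or.inl (Or.inl ⟨hm.1, hm.2, h'⟩)
    · have hm' : ¬ (y ∈ X ∧ x ∈ X) := fun c => hm ⟨c.2, c.1⟩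
      rcases h x y hxy with h' | h'
      · exact Or.inl (Or.inr ⟨hm, h'⟩)
      · exact Or.inr (Or.inr ⟨hm', h'⟩)

lemma fin3_succ_or (a b : Fin 3) (h : a ≠ b) : b = a + 1 ∨ a = b + 1 := by
  revert h; revert a b; decide

lemma c3join_total (k : ℕ) :
    ∀ x y : Fin k × Fin 3, x ≠ y → C3Join k x y ∨ C3Join k y x := by
  intro x y hxy
  rcases lt_trichotomy x.1 y.1 with h | h | h
  · exact Or.inl (Or.inl h)
  · have h2 : x.2 ≠ y.2 := fun e => hxy (Prod.ext h e)
    rcases fin3_succ_or _ _ h2 with h' | h'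
    · exact Or.inl (Or.inr ⟨h, h'⟩)
    · exact Or.inr (Or.inr ⟨h.symm, h'⟩)
  · exact Or.inr (Or.inl h)

/-- The `F_2` dot product of the characteristic vectors of `x` and `y`. -/
noncomputable def dotCV {k : ℕ} (Xs : Fin k → Set V) (x y : V) : ZMod 2 :=
  ∑ i, charVec Xs x i * charVec Xs y i

lemma flipPar_ofFn {k : ℕ} (Xs : Fin k → Set V) (x y : V) :
    flipPar (List.ofFn Xs) x y = dotCV Xs x y := by
  classical
  have key : ∀ L : List (Set V), flipPar L x y
      = (L.map (fun X => if x ∈ X ∧ y ∈ X then (1 : ZMod 2) else 0)).sum := by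
    intro L
    induction L with
    | nil => rfl
    | cons X L ih =>
      have hcons : flipPar (X :: L) x y
          = (if x ∈ X ∧ y ∈ X then 1 else 0) + flipPar L x y := rfl
      rw [hcons, ih, List.map_cons, List.sum_cons]
  rw [key, List.map_ofFn, List.sum_ofFn]
  unfold dotCV charVec
  refine Finset.sum_congr rfl fun i _ => ?_
  by_cases h1 : x ∈ Xs i <;> by_cases h2 : y ∈ Xs i <;>
    simp [Function.comp, h1, h2]

end Aux

/-- If `X_1, …, X_k` is a decycling family of `[C⃗₃]_k` and each factor `i` is
labelled `u_i v_i w_i` along its directed 3-cycle so that the edge `u_i w_i`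
undergoes a net reversal while the edge `u_i v_i` does not, then the
characteristic vectors of `u_1, …, u_k` are linearly independent over `F_2`. -/
theorem charVec_linearIndependent_of_decycling (k : ℕ)
    (Xs : Fin k → Set (Fin k × Fin 3))
    (hdec : IsAcyclic ((List.ofFn Xs).foldl Invert (C3Join k)))
    (u v w : Fin k → Fin k × Fin 3)
    (hfac : ∀ i, (u i).1 = i ∧ (v i).1 = i ∧ (w i).1 = i)
    (hdist : ∀ i, u i ≠ v i ∧ v i ≠ w i ∧ u i ≠ w i)
    (hcyc : ∀ i, C3Join k (u i) (v i) ∧ C3Join k (v i) (w i) ∧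
      C3Join k (w i) (u i))
    (hrev : ∀ i, (List.ofFn Xs).foldl Invert (C3Join k) (u i) (w i))
    (hnorev : ∀ i, (List.ofFn Xs).foldl Invert (C3Join k) (u i) (v i)) :
    LinearIndependent (ZMod 2) (fun i => charVec Xs (u i)) := by
    classical
  rw [Fintype.linearIndependent_iff]
  intro g hg
  by_contra hne
  push_neg at hne
  obtain ⟨j0, hj0⟩ := hne
  set T : (Fin k × Fin 3) → (Fin k × Fin 3) → Prop :=
    (List.ofFn Xs).foldl Invert (C3Join k) with hTdef
  have htot : ∀ x y, x ≠ y → T x y ∨ T y x :=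
    foldl_invert_total _ _ (c3join_total k)
  have hiff : ∀ x y, T x y ↔
      ((dotCV Xs x y = 1 ∧ C3Join k y x) ∨ (dotCV Xs x y ≠ 1 ∧ C3Join k x y)) := by
    intro x y
    have := foldl_invert_iff (List.ofFn Xs) (C3Join k) x y
    rwa [flipPar_ofFn] at this
  -- extract a `T`-minimum among the `u l`, `l` in the support of `g`
  set S : Set (Fin k × Fin 3) := u '' {l | g l ≠ 0} with hSdef
  have hSne : S.Nonempty := ⟨u j0, j0, hj0, rfl⟩
  let r : (Fin k × Fin 3) → (Fin k × Fin 3) → Prop :=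
    fun a b => Relation.TransGen T b a
  haveI : IsTrans (Fin k × Fin 3) r :=
    ⟨fun _ _ _ hab hbc => Relation.TransGen.trans hbc hab⟩
  haveI : IsIrrefl (Fin k × Fin 3) r := ⟨fun a ha => hdec a ha⟩
  obtain ⟨m, hmS, hmin⟩ := (Finite.wellFounded_of_trans_of_irrefl r).has_min S hSne
  obtain ⟨j, hgj, hmj⟩ := hmS
  have hgj : g j ≠ 0 := hgj
  have hbeat : ∀ l, g l ≠ 0 → l ≠ j → T (u l) (u j) := by
    intro l hl hlj
    have hne2 : u l ≠ u j := by
      intro e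
      apply hlj
      have := congrArg Prod.fst e
      rwa [(hfac l).1, (hfac j).1] at this
    rcases htot _ _ hne2 with h | h
    · exact h
    · exact absurd (Relation.TransGen.single (hmj ▸ h)) (hmin (u l) ⟨l, hl, rfl⟩)
  have hbvw : ∀ y : Fin k × Fin 3, y.1 = j → T (u j) y →
      ∀ l, g l ≠ 0 → l ≠ j → T (u l) y := by
    intro y hy hTy l hl hlj
    have hne2 : u l ≠ y := by
      intro e
      apply hlj
      have := congrArg Prod.fst e
      rwa [(hfac l).1, hy] at this
    rcases htot _ _ hne2 with h | h
    · exact h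
    · exact absurd
        (Relation.TransGen.head hTy
          (Relation.TransGen.head h (Relation.TransGen.single (hbeat l hl hlj))))
        (hdec (u j))
  -- dot products with `v j`, `w j` are equal for `l ≠ j`
  have keyd : ∀ (l : Fin k), l ≠ j → ∀ y : Fin k × Fin 3, y.1 = j →
      T (u l) y → dotCV Xs (u l) y = (if j < l then 1 else 0) := by
    intro l hlj y hy hT
    rcases (hiff _ _).1 hT with ⟨hd, hc⟩ | ⟨hd, hc⟩
    · have hjl : j < l := by
        rcases hc with h | h
        · rwa [hy, (hfac l).1] at h
        · exact absurd (by rw [hy, (hfac l).1] at h; exact h.1) hlj.symm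
      rw [if_pos hjl]; exact hd
    · have hlj' : l < j := by
        rcases hc with h | h
        · rwa [(hfac l).1, hy] at h
        · exact absurd (by rw [(hfac l).1, hy] at h; exact h.1) hlj
      rw [if_neg (lt_asymm hlj')]
      rcases zmod2_em (dotCV Xs (u l) y) with h0 | h0
      · exact h0
      · exact absurd h0 hd
  have hdl : ∀ l, g l ≠ 0 → l ≠ j →
      dotCV Xs (u l) (v j) = dotCV Xs (u l) (w j) := by
    intro l hl hlj
    rw [keyd l hlj (v j) (hfac j).2.1 (hbvw (v j) (hfac j).2.1 (hnorev j) l hl hlj),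
      keyd l hlj (w j) (hfac j).2.2 (hbvw (w j) (hfac j).2.2 (hrev j) l hl hlj)]
  -- dot products at `j` itself
  have h1 : (v j).2 = (u j).2 + 1 := by
    rcases (hcyc j).1 with h | h
    · rw [(hfac j).1, (hfac j).2.1] at h; exact absurd h (lt_irrefl _)
    · exact h.2
  have h2 : (w j).2 = (v j).2 + 1 := by
    rcases (hcyc j).2.1 with h | h
    · rw [(hfac j).2.1, (hfac j).2.2] at h; exact absurd h (lt_irrefl _)
    · exact h.2
  have hnc1 : ¬ C3Join k (v j) (u j) := by
    rintro (h | h)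
    · rw [(hfac j).2.1, (hfac j).1] at h; exact absurd h (lt_irrefl _)
    · have hh := h.2
      rw [h1] at hh
      exact absurd hh ((by decide : ∀ a : Fin 3, a ≠ a + 1 + 1) _)
  have hnc2 : ¬ C3Join k (u j) (w j) := by
    rintro (h | h)
    · rw [(hfac j).1, (hfac j).2.2] at h; exact absurd h (lt_irrefl _)
    · have hh := h.2
      rw [h2, h1] at hh
      exact absurd hh ((by decide : ∀ a : Fin 3, a + 1 + 1 ≠ a + 1) _)
  have hdvj : dotCV Xs (u j) (v j) = 0 := by
    rcases (hiff _ _).1 (hnorev j) with ⟨_, hc⟩ | ⟨hne1, _⟩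
    · exact absurd hc hnc1
    · rcases zmod2_em (dotCV Xs (u j) (v j)) with h0 | h0
      · exact h0
      · exact absurd h0 hne1
  have hdwj : dotCV Xs (u j) (w j) = 1 := by
    rcases (hiff _ _).1 (hrev j) with ⟨hd, _⟩ | ⟨_, hc⟩
    · exact hd
    · exact absurd hc hnc2
  -- the dependency kills the dot products
  have hgi : ∀ i, ∑ l, g l * charVec Xs (u l) i = 0 := by
    intro i
    have := congrFun hg i
    simpa [Finset.sum_apply] using this
  have hsum : ∀ y, ∑ l, g l * dotCV Xs (u l) y = 0 := by
    intro y
    calc ∑ l, g l * dotCV Xs (u l) y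
        = ∑ l, ∑ i, g l * charVec Xs (u l) i * charVec Xs y i := by
          simp [dotCV, Finset.mul_sum, mul_assoc]
      _ = ∑ i, ∑ l, g l * charVec Xs (u l) i * charVec Xs y i :=
          Finset.sum_comm
      _ = ∑ i, (∑ l, g l * charVec Xs (u l) i) * charVec Xs y i := by
          simp [Finset.sum_mul]
      _ = 0 := by simp [hgi]
  have hfin : ∑ l, (g l * dotCV Xs (u l) (w j) - g l * dotCV Xs (u l) (v j)) = g j := by
    rw [Finset.sum_eq_single j]
    · rw [hdwj, hdvj]; ring
    · intro l _ hlj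
      by_cases hgl : g l = 0
      · rw [hgl]; ring
      · rw [hdl l hgl hlj]; ring
    · intro h; exact absurd (Finset.mem_univ j) h
  have hz : ∑ l, (g l * dotCV Xs (u l) (w j) - g l * dotCV Xs (u l) (v j)) = 0 := by
    rw [Finset.sum_sub_distrib, hsum (w j), hsum (v j), sub_zero]
  exact hgj (by rw [← hfin, hz])
end
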